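/- arXiv:1209.2551 — 3 statements merged into one kernel-verified Lean document; each statement's English description precedes it below -/
import Mathlib

section
/- Under the hypotheses of Radner's theorem (x, v mean-zero Gaussian, Q_uu ≻ 0, measurements y_i = C_i x + v_i), if u* is a linear structured decision such that for each i the random variable [(u* - Lx)ᵀ Q_uu]_i is independent of y_i and has zero mean, then for every measurable structured decision μ (with μ_i a function of y_i only), E[(μ(y) - Lx)ᵀ Q_uu (μ(y) - Lx)] ≥ E[(u* - Lx)ᵀ Q_uu (u* - Lx)], with equality iff μ(y) = u* almost surely. -/
/-!
Write `d = u* - Lx` and `e = μ(y) - u*`, so that `μ(y) - Lx = e + d`. Because `u*` is linear, the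
`i`-th block of `e` is the measurable function `μ_i - K_i` of `y_i`, hence independent of the
zero-mean block `[dᵀ Q]_i`; so the cross term `E[dᵀ Q e]` vanishes and the cost of `μ` is
`E[eᵀ Q e] + E[dᵀ Q d]`. As `Q ≻ 0`, the first summand is nonnegative and vanishes iff `e = 0` a.s.
-/

open Matrix MeasureTheory ProbabilityTheory

lemma Matrix.IsSymm.dotProduct_mulVec_add {ι R : Type*} [Fintype ι] [CommRing R]
    {Q : Matrix ι ι R} (hQ : Q.IsSymm) (e d : ι → R) :
    (e + d) ⬝ᵥ Q *ᵥ (e + d) = e ⬝ᵥ Q *ᵥ e + 2 * (d ᵥ* Q ⬝ᵥ e) + d ⬝ᵥ Q *ᵥ d := by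
  have hde : e ⬝ᵥ Q *ᵥ d = d ᵥ* Q ⬝ᵥ e := by
    rw [dotProduct_comm, ← mulVec_transpose, hQ.eq]
  rw [mulVec_add, dotProduct_add, add_dotProduct, add_dotProduct, hde, dotProduct_mulVec d]
  ring

section

variable {Ω : Type*} [MeasurableSpace Ω] {P : Measure Ω}

lemma MeasureTheory.MemLp.mulVec {ι κ : Type*} [Fintype ι] [Fintype κ] {p : ENNReal}
    (A : Matrix ι κ ℝ) {f : Ω → κ → ℝ} (hf : MemLp f p P) :
    MemLp (fun ω => A *ᵥ f ω) p P :=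
  (Matrix.mulVecLin A).toContinuousLinearMap.comp_memLp' hf

lemma MeasureTheory.MemLp.integrable_dotProduct {ι : Type*} [Fintype ι] {f g : Ω → ι → ℝ}
    (hf : MemLp f 2 P) (hg : MemLp g 2 P) :
    Integrable (fun ω => f ω ⬝ᵥ g ω) P :=
  integrable_finsetSum _ fun i _ => (hf.eval i).integrable_mul (hg.eval i)

lemma integral_dotProduct_eq_zero_of_indepFun_blocks {ι : Type*} [Fintype ι] {κ : ι → Type*}
    [∀ i, Fintype (κ i)] {g e : Ω → (Σ i, κ i) → ℝ} (hg : MemLp g 2 P) (he : MemLp e 2 P)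
    (hindep : ∀ i, IndepFun (fun ω (k : κ i) => g ω ⟨i, k⟩) (fun ω (k : κ i) => e ω ⟨i, k⟩) P)
    (hmean : ∀ i k, ∫ ω, g ω ⟨i, k⟩ ∂P = 0) :
    ∫ ω, g ω ⬝ᵥ e ω ∂P = 0 := by
  have hcoord : ∀ ik : Σ i, κ i, ∫ ω, g ω ik * e ω ik ∂P = 0 := by
    rintro ⟨i, k⟩
    have hik : IndepFun (fun ω => g ω ⟨i, k⟩) (fun ω => e ω ⟨i, k⟩) P :=
      (hindep i).comp (measurable_pi_apply k) (measurable_pi_apply k)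
    rw [hik.integral_fun_mul_eq_mul_integral (hg.eval _).aestronglyMeasurable
      (he.eval _).aestronglyMeasurable, hmean, zero_mul]
  simp only [dotProduct]
  rw [integral_finsetSum _ fun ik _ => by exact (hg.eval ik).integrable_mul (he.eval ik)]
  exact Finset.sum_eq_zero fun ik _ => hcoord ik

lemma integral_dotProduct_mulVec_add_of_integral_cross_eq_zero {ι : Type*} [Fintype ι]
    {Q : Matrix ι ι ℝ} (hQ : Q.IsSymm) {e d : Ω → ι → ℝ} (he : MemLp e 2 P) (hd : MemLp d 2 P)
    (hcross : ∫ ω, d ω ᵥ* Q ⬝ᵥ e ω ∂P = 0) :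
    ∫ ω, (e ω + d ω) ⬝ᵥ Q *ᵥ (e ω + d ω) ∂P =
      ∫ ω, e ω ⬝ᵥ Q *ᵥ e ω ∂P + ∫ ω, d ω ⬝ᵥ Q *ᵥ d ω ∂P := by
  have hdQ : MemLp (fun ω => d ω ᵥ* Q) 2 P := by
    simpa only [mulVec_transpose] using hd.mulVec Qᵀ
  have hee := he.integrable_dotProduct (he.mulVec Q)
  have hdd := hd.integrable_dotProduct (hd.mulVec Q)
  have hde := (hdQ.integrable_dotProduct he).const_mul 2
  simp_rw [hQ.dotProduct_mulVec_add]
  rw [integral_add (hee.add hde : Integrable (fun ω => _ + _) P) hdd, integral_add hee hde,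
    integral_const_mul, hcross]
  ring

lemma Matrix.PosDef.integral_dotProduct_mulVec_nonneg {ι : Type*} [Fintype ι]
    {Q : Matrix ι ι ℝ} (hQ : Q.PosDef) (e : Ω → ι → ℝ) :
    0 ≤ ∫ ω, e ω ⬝ᵥ Q *ᵥ e ω ∂P :=
  integral_nonneg fun ω => by simpa using hQ.posSemidef.dotProduct_mulVec_nonneg (e ω)

lemma Matrix.PosDef.integral_dotProduct_mulVec_eq_zero_iff {ι : Type*} [Fintype ι]
    {Q : Matrix ι ι ℝ} (hQ : Q.PosDef) {e : Ω → ι → ℝ} (he : MemLp e 2 P) :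
    ∫ ω, e ω ⬝ᵥ Q *ᵥ e ω ∂P = 0 ↔ e =ᵐ[P] 0 := by
  have hnonneg : 0 ≤ fun ω => e ω ⬝ᵥ Q *ᵥ e ω := fun ω => by
    simpa using hQ.posSemidef.dotProduct_mulVec_nonneg (e ω)
  rw [integral_eq_zero_iff_of_nonneg hnonneg (he.integrable_dotProduct (he.mulVec Q))]
  refine ⟨fun h => h.mono fun ω hω => ?_, fun h => h.mono fun ω hω => by simp [hω]⟩
  by_contra hne
  simpa [hω] using hQ.dotProduct_mulVec_pos hne

end

theorem stmt6_general {N n : ℕ} {m p : Fin N → ℕ} {Ω : Type*} [MeasurableSpace Ω]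
    (P : Measure Ω)
    (x : Ω → Fin n → ℝ)
    (y : (i : Fin N) → Ω → Fin (p i) → ℝ)
    (Quu : Matrix ((i : Fin N) × Fin (m i)) ((i : Fin N) × Fin (m i)) ℝ)
    (hQuu : Quu.PosDef)
    (L : Matrix ((i : Fin N) × Fin (m i)) (Fin n) ℝ)
    (ustar : Ω → (i : Fin N) × Fin (m i) → ℝ)
    -- u* is a linear structured decision:
    (hlin : ∃ K : (i : Fin N) → Matrix (Fin (m i)) (Fin (p i)) ℝ,
      ∀ ω (i : Fin N) (k : Fin (m i)), ustar ω ⟨i, k⟩ = (K i *ᵥ y i ω) k)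
    -- for each i, [(u* - Lx)ᵀ Quu]_i is independent of y i and has zero mean:
    (hindep : ∀ i : Fin N,
      IndepFun (fun ω => fun k : Fin (m i) => ((ustar ω - L *ᵥ x ω) ᵥ* Quu) ⟨i, k⟩)
        (y i) P)
    (hmean : ∀ (i : Fin N) (k : Fin (m i)),
      ∫ ω, ((ustar ω - L *ᵥ x ω) ᵥ* Quu) ⟨i, k⟩ ∂P = 0)
    -- square integrability:
    (hx2 : MemLp x 2 P) (hustar2 : MemLp ustar 2 P)
    -- an arbitrary measurable structured decision μ:
    (μdec : (i : Fin N) → (Fin (p i) → ℝ) → Fin (m i) → ℝ)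
    (hμmeas : ∀ i, Measurable (μdec i))
    (hμ2 : MemLp (fun ω => fun ik : (i : Fin N) × Fin (m i) =>
      μdec ik.1 (y ik.1 ω) ik.2) 2 P) :
    (∫ ω, ((fun ik : (i : Fin N) × Fin (m i) => μdec ik.1 (y ik.1 ω) ik.2) - L *ᵥ x ω) ⬝ᵥ
        (Quu *ᵥ ((fun ik : (i : Fin N) × Fin (m i) => μdec ik.1 (y ik.1 ω) ik.2) - L *ᵥ x ω)) ∂P ≥
      ∫ ω, (ustar ω - L *ᵥ x ω) ⬝ᵥ (Quu *ᵥ (ustar ω - L *ᵥ x ω)) ∂P) ∧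
    ((∫ ω, ((fun ik : (i : Fin N) × Fin (m i) => μdec ik.1 (y ik.1 ω) ik.2) - L *ᵥ x ω) ⬝ᵥ
        (Quu *ᵥ ((fun ik : (i : Fin N) × Fin (m i) => μdec ik.1 (y ik.1 ω) ik.2) - L *ᵥ x ω)) ∂P =
      ∫ ω, (ustar ω - L *ᵥ x ω) ⬝ᵥ (Quu *ᵥ (ustar ω - L *ᵥ x ω)) ∂P) ↔
      (fun ω => fun ik : (i : Fin N) × Fin (m i) => μdec ik.1 (y ik.1 ω) ik.2) =ᵐ[P] ustar) := by
  obtain ⟨K, hK⟩ := hlin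
  set μy : Ω → (i : Fin N) × Fin (m i) → ℝ := fun ω ik => μdec ik.1 (y ik.1 ω) ik.2
  have hd : MemLp (fun ω => ustar ω - L *ᵥ x ω) 2 P := hustar2.sub (hx2.mulVec L)
  have he : MemLp (fun ω => μy ω - ustar ω) 2 P := hμ2.sub hustar2
  have hQ : Quu.IsSymm := isHermitian_iff_isSymm.mp hQuu.isHermitian
  have hindep_e : ∀ i, IndepFun (fun ω (k : Fin (m i)) => ((ustar ω - L *ᵥ x ω) ᵥ* Quu) ⟨i, k⟩)
      (fun ω (k : Fin (m i)) => μy ω ⟨i, k⟩ - ustar ω ⟨i, k⟩) P := fun i => by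
    have hψ : Measurable fun z : Fin (p i) → ℝ => μdec i z - K i *ᵥ z :=
      (hμmeas i).sub (Continuous.matrix_mulVec continuous_const continuous_id).measurable
    have hblock : (fun ω (k : Fin (m i)) => μy ω ⟨i, k⟩ - ustar ω ⟨i, k⟩) =
        (fun z => μdec i z - K i *ᵥ z) ∘ y i := by
      funext ω k
      simp only [μy, hK, Function.comp_apply, Pi.sub_apply]
    rw [hblock]
    exact (hindep i).comp measurable_id hψ
  have hcross : ∫ ω, (ustar ω - L *ᵥ x ω) ᵥ* Quu ⬝ᵥ (μy ω - ustar ω) ∂P = 0 := by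
    refine integral_dotProduct_eq_zero_of_indepFun_blocks ?_ he hindep_e hmean
    simpa only [mulVec_transpose] using hd.mulVec Quuᵀ
  have hcost := integral_dotProduct_mulVec_add_of_integral_cross_eq_zero hQ he hd hcross
  simp only [sub_add_sub_cancel] at hcost
  have hnonneg := hQuu.integral_dotProduct_mulVec_nonneg (P := P) fun ω => μy ω - ustar ω
  have hzero := hQuu.integral_dotProduct_mulVec_eq_zero_iff he
  rw [hcost, ← sub_ae_eq_zero]
  exact ⟨by linarith, fun h => hzero.mp (by linarith), fun h => by linarith [hzero.mpr h]⟩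

/-- Radner's theorem, optimality part. Static LQG team with `N` players:
state `x`, measurements `y i` of player `i`, decision coordinates indexed by the
sigma type `(i : Fin N) × Fin (m i)`, `Quu ≻ 0`, `L ∈ ℝ^{m×n}`. If `u*` is a
linear structured decision such that for each `i` the block
`[(u* - Lx)ᵀ Quu]_i` is independent of `y i` and has zero mean, then every
measurable structured decision `μ` (with `μ i` a function of `y i` only) has
cost `E[(μ(y) - Lx)ᵀ Quu (μ(y) - Lx)] ≥ E[(u* - Lx)ᵀ Quu (u* - Lx)]`, with
equality iff `μ(y) = u*` almost surely. -/
theorem stmt6 {N n : ℕ} {m p : Fin N → ℕ} {Ω : Type*} [MeasurableSpace Ω]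
    (P : Measure Ω) [IsProbabilityMeasure P]
    (x : Ω → Fin n → ℝ) (hx : Measurable x)
    (y : (i : Fin N) → Ω → Fin (p i) → ℝ) (hy : ∀ i, Measurable (y i))
    (Quu : Matrix ((i : Fin N) × Fin (m i)) ((i : Fin N) × Fin (m i)) ℝ)
    (hQuu : Quu.PosDef)
    (L : Matrix ((i : Fin N) × Fin (m i)) (Fin n) ℝ)
    (ustar : Ω → (i : Fin N) × Fin (m i) → ℝ)
    -- u* is a linear structured decision:
    (hlin : ∃ K : (i : Fin N) → Matrix (Fin (m i)) (Fin (p i)) ℝ,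
      ∀ ω (i : Fin N) (k : Fin (m i)), ustar ω ⟨i, k⟩ = (K i *ᵥ y i ω) k)
    -- for each i, [(u* - Lx)ᵀ Quu]_i is independent of y i and has zero mean:
    (hindep : ∀ i : Fin N,
      IndepFun (fun ω => fun k : Fin (m i) => ((ustar ω - L *ᵥ x ω) ᵥ* Quu) ⟨i, k⟩)
        (y i) P)
    (hmean : ∀ (i : Fin N) (k : Fin (m i)),
      ∫ ω, ((ustar ω - L *ᵥ x ω) ᵥ* Quu) ⟨i, k⟩ ∂P = 0)
    -- square integrability:
    (hx2 : MemLp x 2 P) (hustar2 : MemLp ustar 2 P)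
    -- an arbitrary measurable structured decision μ:
    (μdec : (i : Fin N) → (Fin (p i) → ℝ) → Fin (m i) → ℝ)
    (hμmeas : ∀ i, Measurable (μdec i))
    (hμ2 : MemLp (fun ω => fun ik : (i : Fin N) × Fin (m i) =>
      μdec ik.1 (y ik.1 ω) ik.2) 2 P) :
    (∫ ω, ((fun ik : (i : Fin N) × Fin (m i) => μdec ik.1 (y ik.1 ω) ik.2) - L *ᵥ x ω) ⬝ᵥ
        (Quu *ᵥ ((fun ik : (i : Fin N) × Fin (m i) => μdec ik.1 (y ik.1 ω) ik.2) - L *ᵥ x ω)) ∂P ≥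
      ∫ ω, (ustar ω - L *ᵥ x ω) ⬝ᵥ (Quu *ᵥ (ustar ω - L *ᵥ x ω)) ∂P) ∧
    ((∫ ω, ((fun ik : (i : Fin N) × Fin (m i) => μdec ik.1 (y ik.1 ω) ik.2) - L *ᵥ x ω) ⬝ᵥ
        (Quu *ᵥ ((fun ik : (i : Fin N) × Fin (m i) => μdec ik.1 (y ik.1 ω) ik.2) - L *ᵥ x ω)) ∂P =
      ∫ ω, (ustar ω - L *ᵥ x ω) ⬝ᵥ (Quu *ᵥ (ustar ω - L *ᵥ x ω)) ∂P) ↔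
      (fun ω => fun ik : (i : Fin N) × Fin (m i) => μdec ik.1 (y ik.1 ω) ik.2) =ᵐ[P] ustar) :=
  stmt6_general P x y Quu hQuu L ustar hlin hindep hmean hx2 hustar2 μdec hμmeas hμ2
end

section
/- The block-diagonal gain K = diag(K_1,…,K_N) is a stationary point of f(K) = Tr E[Q_uu (K(Cx+v) - Lx)(K(Cx+v) - Lx)ᵀ] if and only if for each i = 1,…,N: Σ_{j=1}^N [Q_uu]_{ij} K_j (C_j V_xx C_iᵀ + [V_vv]_{ji}) = -[Q_ux]_i V_xx C_iᵀ, where Q_uu L = -Q_ux. -/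
/-!
Stack `z = (x, v)`. The residual `K y - L x` with `y = C x + v` is `(K J - R) z` for the fixed
matrices `J = [C | 1]` and `R = [L | 0]`, and independence with `E x = 0` makes the second moment
of `z` block diagonal, `diag(Vxx, Vvv)`. Hence `f(K) = Tr(Quu (K J - R) V (K J - R)ᵀ)` is a
quadratic polynomial in `K`; as `Quu` and `V` are symmetric, its derivative along a
block-diagonal direction `D` is `2 Tr(G Dᵀ)` with `G = Quu (K J - R) V Jᵀ`, and
`Quu L = -Qux` turns `G` into `Quu K (C Vxx Cᵀ + Vvv) + Qux Vxx Cᵀ`. The derivative vanishes for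
every block-diagonal `D` iff every diagonal block of `G` vanishes, which is the linear system.
-/

open Matrix MeasureTheory ProbabilityTheory

section SecondMoment

variable {Ω : Type*} [MeasurableSpace Ω] {P : Measure Ω} {ι : Type*}

lemma ProbabilityTheory.IndepFun.integral_apply_mul_apply {κ : Type*} {x : Ω → ι → ℝ}
    {v : Ω → κ → ℝ} (h : IndepFun x v P) (hx : AEStronglyMeasurable x P)
    (hv : AEStronglyMeasurable v P) (i : ι) (j : κ) :
    ∫ ω, x ω i * v ω j ∂P = (∫ ω, x ω i ∂P) * ∫ ω, v ω j ∂P :=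
  (h.comp (measurable_pi_apply i) (measurable_pi_apply j)).integral_fun_mul_eq_mul_integral
    ((continuous_apply i).comp_aestronglyMeasurable hx)
    ((continuous_apply j).comp_aestronglyMeasurable hv)

lemma integral_sumElim_mul_sumElim {κ : Type*} {x : Ω → ι → ℝ} {v : Ω → κ → ℝ}
    {Vxx : Matrix ι ι ℝ} {Vvv : Matrix κ κ ℝ}
    (hVxx : ∀ i j, ∫ ω, x ω i * x ω j ∂P = Vxx i j)
    (hVvv : ∀ i j, ∫ ω, v ω i * v ω j ∂P = Vvv i j)
    (hxv : ∀ i j, ∫ ω, x ω i * v ω j ∂P = 0) (i j : ι ⊕ κ) :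
    ∫ ω, Sum.elim (x ω) (v ω) i * Sum.elim (x ω) (v ω) j ∂P
      = fromBlocks Vxx 0 0 Vvv i j := by
  rcases i with i | i <;> rcases j with j | j
  · exact hVxx i j
  · exact hxv i j
  · simp_rw [Sum.elim_inl, Sum.elim_inr, mul_comm (v _ i)]
    exact hxv j i
  · exact hVvv i j

variable {z : Ω → ι → ℝ} {V : Matrix ι ι ℝ}

lemma isSymm_of_integral_mul (hV : ∀ i j, ∫ ω, z ω i * z ω j ∂P = V i j) : V.IsSymm :=
  IsSymm.ext fun i j => by simp_rw [← hV, mul_comm]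

variable [Fintype ι]

lemma memLp_mulVec_apply (hz : ∀ i, MemLp (z · i) 2 P) {α : Type*} (A : Matrix α ι ℝ)
    (s : α) : MemLp (fun ω => (A *ᵥ z ω) s) 2 P :=
  memLp_finsetSum _ fun i _ => (hz i).const_mul (A s i)

lemma integrable_mulVec_apply_mul (hz : ∀ i, MemLp (z · i) 2 P) {α β : Type*}
    (A : Matrix α ι ℝ) (B : Matrix β ι ℝ) (s : α) (r : β) :
    Integrable (fun ω => (A *ᵥ z ω) s * (B *ᵥ z ω) r) P :=
  (memLp_mulVec_apply hz A s).integrable_mul (memLp_mulVec_apply hz B r)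

lemma integral_mulVec_apply_mul (hz : ∀ i, MemLp (z · i) 2 P)
    (hV : ∀ i j, ∫ ω, z ω i * z ω j ∂P = V i j) {α β : Type*}
    (A : Matrix α ι ℝ) (B : Matrix β ι ℝ) (s : α) (r : β) :
    ∫ ω, (A *ᵥ z ω) s * (B *ᵥ z ω) r ∂P = (A * V * Bᵀ) s r := by
  have hint : ∀ i j, Integrable (fun ω => A s i * B r j * (z ω i * z ω j)) P := fun i j =>
    ((hz i).integrable_mul (hz j)).const_mul _
  have hexpand : ∀ ω, (A *ᵥ z ω) s * (B *ᵥ z ω) r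
      = ∑ i, ∑ j, A s i * B r j * (z ω i * z ω j) := fun ω => by
    simp only [mulVec, dotProduct, Finset.sum_mul_sum]
    exact Finset.sum_congr rfl fun i _ => Finset.sum_congr rfl fun j _ => by ring
  simp_rw [hexpand]
  rw [integral_finsetSum _ fun i _ => integrable_finsetSum _ fun j _ => hint i j]
  simp_rw [integral_finsetSum _ fun j _ => hint _ j, integral_const_mul, hV]
  simp only [mul_apply, transpose_apply, Finset.sum_mul]
  rw [Finset.sum_comm]
  exact Finset.sum_congr rfl fun i _ => Finset.sum_congr rfl fun j _ => by ring

lemma integral_trace_mul_vecMulVec (hz : ∀ i, MemLp (z · i) 2 P)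
    (hV : ∀ i j, ∫ ω, z ω i * z ω j ∂P = V i j) {σ : Type*} [Fintype σ]
    (Q : Matrix σ σ ℝ) (A B : Matrix σ ι ℝ) :
    ∫ ω, (Q * vecMulVec (A *ᵥ z ω) (B *ᵥ z ω)).trace ∂P
      = (Q * (A * V * Bᵀ)).trace := by
  have hint : ∀ r s, Integrable (fun ω => Q r s * ((A *ᵥ z ω) s * (B *ᵥ z ω) r)) P :=
    fun r s => (integrable_mulVec_apply_mul hz A B s r).const_mul _
  have hexpand : ∀ ω, (Q * vecMulVec (A *ᵥ z ω) (B *ᵥ z ω)).trace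
      = ∑ r, ∑ s, Q r s * ((A *ᵥ z ω) s * (B *ᵥ z ω) r) := fun ω => by
    simp only [trace, diag, mul_apply, vecMulVec_apply]
  simp_rw [hexpand]
  rw [integral_finsetSum _ fun r _ => integrable_finsetSum _ fun s _ => hint r s]
  simp_rw [integral_finsetSum _ fun s _ => hint _ s, integral_const_mul,
    integral_mulVec_apply_mul hz hV]
  simp only [trace, diag, mul_apply]

end SecondMoment

section QuadraticLine

variable {σ κ : Type*} [Fintype σ] [Fintype κ]

lemma trace_mul_add_smul_mul_transpose {α : Type*} [CommRing α] (Q : Matrix σ σ α)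
    (V : Matrix κ κ α) (W U : Matrix σ κ α) (t : α) :
    (Q * ((W + t • U) * V * (W + t • U)ᵀ)).trace
      = (Q * (W * V * Wᵀ)).trace
        + (t * ((Q * (W * V * Uᵀ)).trace + (Q * (U * V * Wᵀ)).trace)
          + t ^ 2 * (Q * (U * V * Uᵀ)).trace) := by
  simp only [transpose_add, transpose_smul, Matrix.add_mul, Matrix.mul_add, Matrix.smul_mul,
    Matrix.mul_smul, trace_add, trace_smul, smul_eq_mul]
  ring

lemma trace_mul_mul_transpose_comm {α : Type*} [CommSemiring α] {Q : Matrix σ σ α}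
    {V : Matrix κ κ α} (hQ : Q.IsSymm) (hV : V.IsSymm) (W U : Matrix σ κ α) :
    (Q * (U * V * Wᵀ)).trace = (Q * (W * V * Uᵀ)).trace := by
  rw [← trace_transpose, transpose_mul, transpose_mul, transpose_mul, transpose_transpose, hQ.eq,
    hV.eq, trace_mul_comm, Matrix.mul_assoc]

variable {Q : Matrix σ σ ℝ} {V : Matrix κ κ ℝ} (W U : Matrix σ κ ℝ)

lemma hasDerivAt_trace_mul_add_smul_mul_transpose :
    HasDerivAt (fun t : ℝ => (Q * ((W + t • U) * V * (W + t • U)ᵀ)).trace)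
      ((Q * (W * V * Uᵀ)).trace + (Q * (U * V * Wᵀ)).trace) 0 := by
  simp_rw [trace_mul_add_smul_mul_transpose]
  exact ((((hasDerivAt_id (0 : ℝ)).mul_const _).add
    ((hasDerivAt_pow 2 (0 : ℝ)).mul_const _)).const_add _).congr_deriv (by simp)

lemma deriv_trace_mul_add_smul_mul_transpose (hQ : Q.IsSymm) (hV : V.IsSymm) :
    deriv (fun t : ℝ => (Q * ((W + t • U) * V * (W + t • U)ᵀ)).trace) 0
      = 2 * (Q * (W * V * Uᵀ)).trace := by
  rw [(hasDerivAt_trace_mul_add_smul_mul_transpose W U).deriv,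
    trace_mul_mul_transpose_comm hQ hV, two_mul]

end QuadraticLine

section Residual

variable {α σ ρ ι : Type*} [CommRing α] [Fintype ρ] [Fintype ι] [DecidableEq ρ]
  (A : Matrix σ ρ α) (C : Matrix ρ ι α) (L : Matrix σ ι α)

lemma mulVec_add_sub_mulVec_eq_mulVec_sumElim (x : ι → α) (v : ρ → α) :
    A *ᵥ (C *ᵥ x + v) - L *ᵥ x
      = (A * fromCols C (1 : Matrix ρ ρ α) - fromCols L 0) *ᵥ Sum.elim x v := by
  simp [sub_mulVec, mulVec_mulVec, mulVec_add]

lemma fromCols_sub_mul_fromBlocks_mul_transpose (Vxx : Matrix ι ι α) (Vvv : Matrix ρ ρ α) :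
    (A * fromCols C (1 : Matrix ρ ρ α) - fromCols L 0) * fromBlocks Vxx 0 0 Vvv
        * (fromCols C (1 : Matrix ρ ρ α))ᵀ
      = A * (C * Vxx * Cᵀ + Vvv) - L * Vxx * Cᵀ := by
  simp only [Matrix.sub_mul, Matrix.mul_fromCols, fromCols_mul_fromBlocks, transpose_fromCols,
    fromCols_mul_fromRows]
  simp [Matrix.mul_add, Matrix.mul_assoc]

end Residual

section BlockDiagonal

variable {α : Type*} [Semiring α] {o : Type*} [Fintype o] [DecidableEq o]
  {l' m' n' p' : o → Type*} [∀ i, Fintype (m' i)]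

lemma mul_blockDiagonal'_apply_mk {l : Type*} (Q : Matrix l (Σ i, m' i) α)
    (K : ∀ i, Matrix (m' i) (n' i) α) (r : l) (j : o) (b : n' j) :
    (Q * blockDiagonal' K) r ⟨j, b⟩ = ∑ a, Q r ⟨j, a⟩ * K j a b := by
  rw [mul_apply, ← Finset.univ_sigma_univ, Finset.sum_sigma,
    Finset.sum_eq_single j (fun k _ hk => ?_) (by simp)]
  · simp only [blockDiagonal'_apply_eq]
  · simp only [blockDiagonal'_apply_ne _ _ _ hk, mul_zero, Finset.sum_const_zero]

lemma trace_mul_blockDiagonal' [∀ i, Fintype (n' i)] (G : Matrix (Σ i, n' i) (Σ i, m' i) α)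
    (M : ∀ i, Matrix (m' i) (n' i) α) :
    (G * blockDiagonal' M).trace = ∑ i, (blockDiag' G i * M i).trace := by
  simp only [trace, diag, ← Finset.univ_sigma_univ, Finset.sum_sigma,
    mul_blockDiagonal'_apply_mk]
  rfl

lemma forall_trace_mul_transpose_blockDiagonal'_eq_zero_iff [∀ i, Fintype (n' i)]
    (G : Matrix (Σ i, m' i) (Σ i, n' i) α) :
    (∀ M : ∀ i, Matrix (m' i) (n' i) α, (G * (blockDiagonal' M)ᵀ).trace = 0) ↔
      ∀ i, blockDiag' G i = 0 := by
  simp_rw [blockDiagonal'_transpose, trace_mul_blockDiagonal']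
  refine ⟨fun h i => ext_iff_trace_mul_right.2 fun X => ?_, fun h M => by simp [h]⟩
  have hX := h (Pi.single i Xᵀ)
  rw [Finset.sum_eq_single i (fun j _ hj => by simp [Pi.single_eq_of_ne hj]) (by simp),
    Pi.single_eq_same, transpose_transpose] at hX
  simpa using hX

lemma blockDiag'_mul_blockDiagonal'_mul [∀ i, Fintype (n' i)]
    (Q : Matrix (Σ i, l' i) (Σ i, m' i) α) (K : ∀ i, Matrix (m' i) (n' i) α)
    (X : Matrix (Σ i, n' i) (Σ i, p' i) α) (i : o) :
    blockDiag' (Q * blockDiagonal' K * X) i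
      = ∑ j, Q.submatrix (Sigma.mk i) (Sigma.mk j) * K j
          * X.submatrix (Sigma.mk j) (Sigma.mk i) := by
  ext a b
  rw [blockDiag'_apply, mul_apply, ← Finset.univ_sigma_univ, Finset.sum_sigma, Matrix.sum_apply]
  simp_rw [mul_blockDiagonal'_apply_mk]
  simp only [mul_apply, submatrix_apply]

lemma deriv_trace_blockDiagonal'_add_smul [∀ i, Fintype (n' i)] {κ : Type*} [Fintype κ]
    {Q : Matrix (Σ i, m' i) (Σ i, m' i) ℝ} {V : Matrix κ κ ℝ}
    (hQ : Q.IsSymm) (hV : V.IsSymm) (J : Matrix (Σ i, n' i) κ ℝ) (R : Matrix (Σ i, m' i) κ ℝ)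
    (K D : ∀ i, Matrix (m' i) (n' i) ℝ) :
    deriv (fun t : ℝ => (Q * ((blockDiagonal' (fun i => K i + t • D i) * J - R) * V
        * (blockDiagonal' (fun i => K i + t • D i) * J - R)ᵀ)).trace) 0
      = 2 * (Q * ((blockDiagonal' K * J - R) * V * Jᵀ) * (blockDiagonal' D)ᵀ).trace := by
  have hline : ∀ t : ℝ, blockDiagonal' (fun i => K i + t • D i) * J - R
      = (blockDiagonal' K * J - R) + t • (blockDiagonal' D * J) := fun t => by
    rw [show (fun i => K i + t • D i) = K + t • D from rfl, blockDiagonal'_add,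
      blockDiagonal'_smul, Matrix.add_mul, Matrix.smul_mul]
    abel
  simp_rw [hline]
  rw [deriv_trace_mul_add_smul_mul_transpose _ _ hQ hV, transpose_mul, ← Matrix.mul_assoc _ Jᵀ,
    ← Matrix.mul_assoc Q]

end BlockDiagonal

theorem stmt8_general {N n : ℕ} {m p : Fin N → ℕ} {Ω : Type*} [MeasurableSpace Ω]
    (P : Measure Ω)
    (x : Ω → Fin n → ℝ) (v : Ω → (j : Fin N) × Fin (p j) → ℝ)
    (hindep : IndepFun x v P)
    (hx2 : MemLp x 2 P) (hv2 : MemLp v 2 P)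
    (hxmean : ∀ i, ∫ ω, x ω i ∂P = 0)
    (Vxx : Matrix (Fin n) (Fin n) ℝ)
    (Vvv : Matrix ((j : Fin N) × Fin (p j)) ((j : Fin N) × Fin (p j)) ℝ)
    (hVxx : ∀ i j, ∫ ω, x ω i * x ω j ∂P = Vxx i j)
    (hVvv : ∀ i j, ∫ ω, v ω i * v ω j ∂P = Vvv i j)
    (Quu : Matrix ((i : Fin N) × Fin (m i)) ((i : Fin N) × Fin (m i)) ℝ)
    (hQuu : Quu.PosDef)
    (L : Matrix ((i : Fin N) × Fin (m i)) (Fin n) ℝ)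
    (Qux : Matrix ((i : Fin N) × Fin (m i)) (Fin n) ℝ)
    (hL : Quu * L = -Qux)
    (Cb : (i : Fin N) → Matrix (Fin (p i)) (Fin n) ℝ)
    (K : (i : Fin N) → Matrix (Fin (m i)) (Fin (p i)) ℝ) :
    -- f evaluated on a block-diagonal gain:
    (let C : Matrix ((j : Fin N) × Fin (p j)) (Fin n) ℝ := fun jb k => Cb jb.1 jb.2 k;
     let f : ((i : Fin N) → Matrix (Fin (m i)) (Fin (p i)) ℝ) → ℝ := fun K' =>
       ∫ ω, (Quu * vecMulVec
          (blockDiagonal' K' *ᵥ (C *ᵥ x ω + v ω) - L *ᵥ x ω)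
          (blockDiagonal' K' *ᵥ (C *ᵥ x ω + v ω) - L *ᵥ x ω)).trace ∂P;
     -- stationarity: every directional derivative vanishes
     (∀ D : (i : Fin N) → Matrix (Fin (m i)) (Fin (p i)) ℝ,
        deriv (fun t : ℝ => f (fun i => K i + t • D i)) 0 = 0) ↔
     -- the linear system of equations
     (∀ i : Fin N,
        (∑ j : Fin N,
          (Quu.submatrix (Sigma.mk i) (Sigma.mk j)) * K j *
            (Cb j * Vxx * (Cb i)ᵀ +
              Vvv.submatrix (Sigma.mk j) (Sigma.mk i))) =
        -((Qux.submatrix (Sigma.mk i) id) * Vxx * (Cb i)ᵀ))) := by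
  intro C f
  set J : Matrix ((j : Fin N) × Fin (p j)) (Fin n ⊕ (j : Fin N) × Fin (p j)) ℝ := fromCols C 1
  set R : Matrix ((i : Fin N) × Fin (m i)) (Fin n ⊕ (j : Fin N) × Fin (p j)) ℝ := fromCols L 0
  set V := fromBlocks Vxx 0 0 Vvv
  set G := Quu * blockDiagonal' K * (C * Vxx * Cᵀ + Vvv) + Qux * Vxx * Cᵀ
  have hz : ∀ i, MemLp (fun ω => Sum.elim (x ω) (v ω) i) 2 P := by
    rintro (k | l)
    exacts [hx2.eval k, hv2.eval l]
  have hV : ∀ i j, ∫ ω, Sum.elim (x ω) (v ω) i * Sum.elim (x ω) (v ω) j ∂P = V i j :=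
    integral_sumElim_mul_sumElim hVxx hVvv fun k l => by
      rw [hindep.integral_apply_mul_apply hx2.1 hv2.1, hxmean, zero_mul]
  have hf : ∀ K', f K' = (Quu * ((blockDiagonal' K' * J - R) * V
      * (blockDiagonal' K' * J - R)ᵀ)).trace := fun K' => by
    simp only [f, mulVec_add_sub_mulVec_eq_mulVec_sumElim, integral_trace_mul_vecMulVec hz hV]
    rfl
  have hgrad : Quu * ((blockDiagonal' K * J - R) * V * Jᵀ) = G := by
    simp only [J, R, V, G, fromCols_sub_mul_fromBlocks_mul_transpose, Matrix.mul_sub,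
      ← Matrix.mul_assoc, hL, Matrix.neg_mul, sub_neg_eq_add]
  have hderiv : ∀ D, deriv (fun t : ℝ => f fun i => K i + t • D i) 0
      = 2 * (G * (blockDiagonal' D)ᵀ).trace := fun D => by
    simp_rw [hf]
    rw [deriv_trace_blockDiagonal'_add_smul (isHermitian_iff_isSymm.1 hQuu.isHermitian)
      (isSymm_of_integral_mul hV), hgrad]
  have hblock : ∀ i, blockDiag' G i = (∑ j : Fin N,
      (Quu.submatrix (Sigma.mk i) (Sigma.mk j)) * K j *
        (Cb j * Vxx * (Cb i)ᵀ + Vvv.submatrix (Sigma.mk j) (Sigma.mk i)))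
      + Qux.submatrix (Sigma.mk i) id * Vxx * (Cb i)ᵀ := fun i => by
    rw [blockDiag'_add, Pi.add_apply, blockDiag'_mul_blockDiagonal'_mul]
    rfl
  simp_rw [hderiv, mul_eq_zero, two_ne_zero, false_or,
    forall_trace_mul_transpose_blockDiagonal'_eq_zero_iff, hblock, add_eq_zero_iff_eq_neg]

/-- Stationarity condition for the optimal linear team decision.  With
`K = diag(K_1, …, K_N)` (block-diagonal), `C` stacked from the `C_i`, and
`f(K) = Tr E[Quu (K(Cx+v) - Lx)(K(Cx+v) - Lx)ᵀ]`, the gain `K` is a stationary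
point of `f` (all directional derivatives over block-diagonal perturbations
vanish) iff for each `i`:
`Σ_j [Quu]_{ij} K_j (C_j Vxx C_iᵀ + [Vvv]_{ji}) = -[Qux]_i Vxx C_iᵀ`,
where `Quu L = -Qux`. -/
theorem stmt8 {N n : ℕ} {m p : Fin N → ℕ} {Ω : Type*} [MeasurableSpace Ω]
    (P : Measure Ω) [IsProbabilityMeasure P]
    (x : Ω → Fin n → ℝ) (v : Ω → (j : Fin N) × Fin (p j) → ℝ)
    (hx : Measurable x) (hv : Measurable v)
    (hindep : IndepFun x v P)
    (hx2 : MemLp x 2 P) (hv2 : MemLp v 2 P)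
    (hxmean : ∀ i, ∫ ω, x ω i ∂P = 0) (hvmean : ∀ i, ∫ ω, v ω i ∂P = 0)
    (Vxx : Matrix (Fin n) (Fin n) ℝ)
    (Vvv : Matrix ((j : Fin N) × Fin (p j)) ((j : Fin N) × Fin (p j)) ℝ)
    (hVxxsym : Vxxᵀ = Vxx) (hVvvsym : Vvvᵀ = Vvv)
    (hVxx : ∀ i j, ∫ ω, x ω i * x ω j ∂P = Vxx i j)
    (hVvv : ∀ i j, ∫ ω, v ω i * v ω j ∂P = Vvv i j)
    (Quu : Matrix ((i : Fin N) × Fin (m i)) ((i : Fin N) × Fin (m i)) ℝ)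
    (hQuu : Quu.PosDef)
    (L : Matrix ((i : Fin N) × Fin (m i)) (Fin n) ℝ)
    (Qux : Matrix ((i : Fin N) × Fin (m i)) (Fin n) ℝ)
    (hL : Quu * L = -Qux)
    (Cb : (i : Fin N) → Matrix (Fin (p i)) (Fin n) ℝ)
    (K : (i : Fin N) → Matrix (Fin (m i)) (Fin (p i)) ℝ) :
    -- f evaluated on a block-diagonal gain:
    (let C : Matrix ((j : Fin N) × Fin (p j)) (Fin n) ℝ := fun jb k => Cb jb.1 jb.2 k;
     let f : ((i : Fin N) → Matrix (Fin (m i)) (Fin (p i)) ℝ) → ℝ := fun K' =>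
       ∫ ω, (Quu * vecMulVec
          (blockDiagonal' K' *ᵥ (C *ᵥ x ω + v ω) - L *ᵥ x ω)
          (blockDiagonal' K' *ᵥ (C *ᵥ x ω + v ω) - L *ᵥ x ω)).trace ∂P;
     -- stationarity: every directional derivative vanishes
     (∀ D : (i : Fin N) → Matrix (Fin (m i)) (Fin (p i)) ℝ,
        deriv (fun t : ℝ => f (fun i => K i + t • D i)) 0 = 0) ↔
     -- the linear system of equations
     (∀ i : Fin N,
        (∑ j : Fin N,
          (Quu.submatrix (Sigma.mk i) (Sigma.mk j)) * K j *
            (Cb j * Vxx * (Cb i)ᵀ +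
              Vvv.submatrix (Sigma.mk j) (Sigma.mk i))) =
        -((Qux.submatrix (Sigma.mk i) id) * Vxx * (Cb i)ᵀ))) :=
  stmt8_general P x v hindep hx2 hv2 hxmean Vxx Vvv hVxx hVvv Quu hQuu L Qux hL Cb K
end

section
/- In the two-player example (C_1=C_2=1, x,v_1,v_2 ∼ N(0,1) independent, Q_xx=1, Q_uu=[[2,1],[1,2]], Q_ux=-[1;1]), the certainty-equivalence policy u_i = (1/6) y_i yields expected cost 11/18 ≈ 0.611, strictly greater than the team-optimal cost 3/5 = 0.600 achieved by u_i = (1/5) y_i; hence separation of estimation and control fails. -/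
/-!
For linear decisions `u_i = k y_i` the cost is a quadratic form in `(x, v₁, v₂)`, so by linearity
of the integral it only depends on the second moments, and these give
`1 - 4k + 10k² = 10 (k - 1/5)² + 3/5`. Hence `k = 1/5` is the best linear gain, while the
certainty-equivalence gain `1/3 · 1/2 = 1/6` pays an excess of `10 / 30² = 1/90`.
-/

open MeasureTheory ProbabilityTheory

theorem integral_quadratic_form {Ω : Type*} [MeasurableSpace Ω] {P : Measure Ω}
    {x y z : Ω → ℝ} (hx : MemLp x 2 P) (hy : MemLp y 2 P) (hz : MemLp z 2 P)
    (a b c d e f : ℝ) :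
    ∫ ω, (a * x ω ^ 2 + b * y ω ^ 2 + c * z ω ^ 2 + d * (x ω * y ω) + e * (x ω * z ω)
        + f * (y ω * z ω)) ∂P =
      a * ∫ ω, x ω ^ 2 ∂P + b * ∫ ω, y ω ^ 2 ∂P + c * ∫ ω, z ω ^ 2 ∂P
        + d * ∫ ω, x ω * y ω ∂P + e * ∫ ω, x ω * z ω ∂P + f * ∫ ω, y ω * z ω ∂P := by
  have hxy : Integrable (fun ω => x ω * y ω) P := hx.integrable_mul hy
  have hxz : Integrable (fun ω => x ω * z ω) P := hx.integrable_mul hz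
  have hyz : Integrable (fun ω => y ω * z ω) P := hy.integrable_mul hz
  have hx2 := hx.integrable_sq
  have hy2 := hy.integrable_sq
  have hz2 := hz.integrable_sq
  rw [integral_add (by fun_prop) (by fun_prop), integral_add (by fun_prop) (by fun_prop),
    integral_add (by fun_prop) (by fun_prop), integral_add (by fun_prop) (by fun_prop),
    integral_add (by fun_prop) (by fun_prop)]
  simp only [integral_const_mul]

section TwoMemberTeam

variable {Ω : Type*} [MeasurableSpace Ω] (P : Measure Ω) (x v1 v2 : Ω → ℝ)

noncomputable def linearPolicyCost (k : ℝ) : ℝ :=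
  ∫ ω, ((x ω) ^ 2 - 2 * (k * (x ω + v1 ω) + k * (x ω + v2 ω)) * x ω +
    (2 * (k * (x ω + v1 ω)) ^ 2 + 2 * (k * (x ω + v1 ω)) * (k * (x ω + v2 ω)) +
      2 * (k * (x ω + v2 ω)) ^ 2)) ∂P

variable {P x v1 v2}

theorem linearPolicyCost_eq
    (hx2 : MemLp x 2 P) (hv12 : MemLp v1 2 P) (hv22 : MemLp v2 2 P)
    (hxvar : ∫ ω, (x ω) ^ 2 ∂P = 1)
    (hv1var : ∫ ω, (v1 ω) ^ 2 ∂P = 1) (hv2var : ∫ ω, (v2 ω) ^ 2 ∂P = 1)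
    (hxv1 : ∫ ω, x ω * v1 ω ∂P = 0) (hxv2 : ∫ ω, x ω * v2 ω ∂P = 0)
    (hv1v2 : ∫ ω, v1 ω * v2 ω ∂P = 0) (k : ℝ) :
    linearPolicyCost P x v1 v2 k = 1 - 4 * k + 10 * k ^ 2 := by
  have hform : linearPolicyCost P x v1 v2 k =
      ∫ ω, ((1 - 4 * k + 6 * k ^ 2) * x ω ^ 2 + 2 * k ^ 2 * v1 ω ^ 2 + 2 * k ^ 2 * v2 ω ^ 2
        + (6 * k ^ 2 - 2 * k) * (x ω * v1 ω) + (6 * k ^ 2 - 2 * k) * (x ω * v2 ω)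
        + 2 * k ^ 2 * (v1 ω * v2 ω)) ∂P := by
    unfold linearPolicyCost
    congr with ω
    ring
  rw [hform, integral_quadratic_form hx2 hv12 hv22, hxvar, hv1var, hv2var, hxv1, hxv2, hv1v2]
  ring

end TwoMemberTeam

theorem stmt10_general {Ω : Type*} [MeasurableSpace Ω] (P : Measure Ω)
    (x v1 v2 : Ω → ℝ)
    (hx2 : MemLp x 2 P) (hv12 : MemLp v1 2 P) (hv22 : MemLp v2 2 P)
    (hxvar : ∫ ω, (x ω) ^ 2 ∂P = 1)
    (hv1var : ∫ ω, (v1 ω) ^ 2 ∂P = 1) (hv2var : ∫ ω, (v2 ω) ^ 2 ∂P = 1)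
    (hxv1 : ∫ ω, x ω * v1 ω ∂P = 0) (hxv2 : ∫ ω, x ω * v2 ω ∂P = 0)
    (hv1v2 : ∫ ω, v1 ω * v2 ω ∂P = 0) :
    let cost : ℝ → ℝ := fun k =>
      ∫ ω, ((x ω) ^ 2 - 2 * (k * (x ω + v1 ω) + k * (x ω + v2 ω)) * x ω +
        (2 * (k * (x ω + v1 ω)) ^ 2 + 2 * (k * (x ω + v1 ω)) * (k * (x ω + v2 ω)) +
          2 * (k * (x ω + v2 ω)) ^ 2)) ∂P
    cost (1/6) = 11/18 ∧ cost (1/5) = 3/5 ∧ cost (1/5) < cost (1/6) := by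
  intro cost
  have hcost (k : ℝ) : cost k = 1 - 4 * k + 10 * k ^ 2 :=
    linearPolicyCost_eq hx2 hv12 hv22 hxvar hv1var hv2var hxv1 hxv2 hv1v2 k
  simp only [hcost]
  norm_num

/-- Failure of separation in the two-member LQG team example.  With
`x, v₁, v₂` mean-zero, unit-variance, mutually uncorrelated (independent
standard Gaussians), `y_i = x + v_i`, decisions `u_i = k y_i`, and cost
`E[Qxx x² + 2 Qxu·u x + uᵀ Quu u]` with `Qxx = 1`, `Quu = [[2,1],[1,2]]`,
`Qux = -[1;1]`: the certainty-equivalence policy `k = 1/6` yields cost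
`11/18`, strictly greater than the team-optimal cost `3/5` of `k = 1/5`. -/
theorem stmt10 {Ω : Type*} [MeasurableSpace Ω] (P : Measure Ω)
    [IsProbabilityMeasure P]
    (x v1 v2 : Ω → ℝ)
    (hx2 : MemLp x 2 P) (hv12 : MemLp v1 2 P) (hv22 : MemLp v2 2 P)
    (hxm : ∫ ω, x ω ∂P = 0) (hv1m : ∫ ω, v1 ω ∂P = 0) (hv2m : ∫ ω, v2 ω ∂P = 0)
    (hxvar : ∫ ω, (x ω) ^ 2 ∂P = 1)
    (hv1var : ∫ ω, (v1 ω) ^ 2 ∂P = 1) (hv2var : ∫ ω, (v2 ω) ^ 2 ∂P = 1)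
    (hxv1 : ∫ ω, x ω * v1 ω ∂P = 0) (hxv2 : ∫ ω, x ω * v2 ω ∂P = 0)
    (hv1v2 : ∫ ω, v1 ω * v2 ω ∂P = 0) :
    let cost : ℝ → ℝ := fun k =>
      ∫ ω, ((x ω) ^ 2 - 2 * (k * (x ω + v1 ω) + k * (x ω + v2 ω)) * x ω +
        (2 * (k * (x ω + v1 ω)) ^ 2 + 2 * (k * (x ω + v1 ω)) * (k * (x ω + v2 ω)) +
          2 * (k * (x ω + v2 ω)) ^ 2)) ∂P
    cost (1/6) = 11/18 ∧ cost (1/5) = 3/5 ∧ cost (1/5) < cost (1/6) :=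
  stmt10_general P x v1 v2 hx2 hv12 hv22 hxvar hv1var hv2var hxv1 hxv2 hv1v2
end
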